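/- If $u \sim \mathcal{E}(\mu_1)$, $v \sim \mathcal{E}(\mu_2)$, and $z \sim \mathcal{E}(1)$ are independent exponential random variables, then the random variable $W_1 = \frac{u z}{u+v}$ has cumulative distribution function $F_{W_1}(w) = 1 - e^{-w}\left[1 - \frac{\mu_1}{\mu_2} w \, \Psi\left(1,1,\frac{\mu_1}{\mu_2} w\right)\right]$ for $w \ge 0$, where $\Psi(a,b,x)$ is the Tricomi confluent hypergeometric function. -/

import Mathlib

open MeasureTheory ProbabilityTheory

/-- The Tricomi confluent hypergeometric function `Ψ(1,1,x)`, via its standard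
integral representation `Ψ(1,1,x) = ∫₀^∞ e^{-x t} / (1+t) dt` (equal to `e^x E₁(x)`). -/
noncomputable def tricomiU11 (x : ℝ) : ℝ :=
  ∫ t in Set.Ioi (0 : ℝ), Real.exp (-(x * t)) / (1 + t)

/-!
Given `(u, v)` with `u, v > 0`, the event `W₁ > w` is `z > w (u + v) / u`, of probability
`e^{-w} e^{-(w/u) v}`. Averaging over `v` with the Laplace transform `E[e^{-s v}] = μ₂ / (μ₂ + s)`
leaves `e^{-w} E[1 - c / (u + c)]` with `c = w / μ₂`, and the substitution `u = c t` turns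
`E[c / (u + c)]` into `μ₁ c Ψ(1, 1, μ₁ c)`.
-/

open Set Real
open scoped ENNReal

namespace ProbabilityTheory

variable {r : ℝ}

lemma expMeasure_Ioi (hr : 0 < r) {c : ℝ} (hc : 0 ≤ c) :
    expMeasure r (Ioi c) = ENNReal.ofReal (exp (-(r * c))) := by
  have := isProbabilityMeasure_expMeasure hr
  rw [← compl_Iic, prob_compl_eq_one_sub measurableSet_Iic, ← ofReal_cdf, cdf_expMeasure_eq hr,
    if_pos hc, ← ENNReal.ofReal_one,
    ← ENNReal.ofReal_sub _ (sub_nonneg.2 (exp_le_one_iff.2 (by nlinarith))), sub_sub_cancel]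

lemma ae_pos_expMeasure (hr : 0 < r) : ∀ᵐ x ∂expMeasure r, 0 < x := by
  have := isProbabilityMeasure_expMeasure hr
  simp only [ae_iff, not_lt]
  change expMeasure r (Iic 0) = 0
  simp [← ofReal_cdf, cdf_expMeasure_eq hr]

lemma lintegral_expMeasure (f : ℝ → ℝ≥0∞) :
    ∫⁻ x, f x ∂expMeasure r = ∫⁻ x in Ioi 0, ENNReal.ofReal (r * exp (-(r * x))) * f x := by
  have hpdf : Measurable (exponentialPDF r) := (measurable_exponentialPDFReal r).ennreal_ofReal
  change ∫⁻ x, f x ∂volume.withDensity (exponentialPDF r) = _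
  rw [lintegral_withDensity_eq_lintegral_mul_non_measurable _ hpdf
      (ae_of_all _ fun _ ↦ ENNReal.ofReal_lt_top),
    setLIntegral_congr Ioi_ae_eq_Ici, ← setLIntegral_eq_of_support_subset]
  · refine setLIntegral_congr_fun measurableSet_Ici fun x hx ↦ ?_
    simp [exponentialPDF_of_nonneg (mem_Ici.1 hx)]
  · intro x hx
    by_contra hneg
    simp [exponentialPDF_of_neg (not_le.1 hneg)] at hx

lemma integral_expMeasure (hr : 0 ≤ r) (f : ℝ → ℝ) :
    ∫ x, f x ∂expMeasure r = ∫ x in Ioi 0, r * exp (-(r * x)) * f x := by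
  have hpdf : Measurable (exponentialPDF r) := (measurable_exponentialPDFReal r).ennreal_ofReal
  change ∫ x, f x ∂volume.withDensity (exponentialPDF r) = _
  rw [integral_withDensity_eq_integral_toReal_smul hpdf
      (ae_of_all _ fun _ ↦ ENNReal.ofReal_lt_top),
    ← integral_Ici_eq_integral_Ioi, ← setIntegral_eq_integral_of_forall_compl_eq_zero]
  · refine setIntegral_congr_fun measurableSet_Ici fun x hx ↦ ?_
    rw [exponentialPDF_of_nonneg (mem_Ici.1 hx), ENNReal.toReal_ofReal (by positivity),
      smul_eq_mul]
  · intro x hx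
    simp [exponentialPDF_of_neg (not_le.1 hx)]

lemma lintegral_exp_neg_mul_expMeasure (hr : 0 ≤ r) {s : ℝ} (hrs : 0 < r + s) :
    ∫⁻ y, ENNReal.ofReal (exp (-(s * y))) ∂expMeasure r = ENNReal.ofReal (r / (r + s)) := by
  have hprod : ∀ y, ENNReal.ofReal (r * exp (-(r * y))) * ENNReal.ofReal (exp (-(s * y)))
      = ENNReal.ofReal (r * exp (-(r + s) * y)) := fun y ↦ by
    rw [← ENNReal.ofReal_mul (by positivity), mul_assoc, ← exp_add]
    ring_nf
  simp_rw [lintegral_expMeasure, hprod]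
  rw [← ofReal_integral_eq_lintegral_ofReal
      ((integrableOn_exp_mul_Ioi (by linarith) 0).const_mul r)
      (ae_of_all _ fun y ↦ by positivity),
    integral_const_mul, integral_exp_mul_Ioi (by linarith), mul_zero, exp_zero]
  congr 1
  field_simp

lemma integral_div_add_expMeasure (hr : 0 ≤ r) {c : ℝ} (hc : 0 ≤ c) :
    ∫ x, c / (x + c) ∂expMeasure r = r * c * tricomiU11 (r * c) := by
  rcases hc.eq_or_lt with rfl | hc
  · simp
  have hsub := integral_comp_mul_left_Ioi (fun x ↦ r * exp (-(r * x)) * (c / (x + c))) 0 hc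
  rw [mul_zero, smul_eq_mul] at hsub
  calc ∫ x, c / (x + c) ∂expMeasure r
      = c * ∫ x in Ioi 0, r * exp (-(r * (c * x))) * (c / (c * x + c)) := by
        rw [integral_expMeasure hr, hsub, mul_inv_cancel_left₀ hc.ne']
    _ = c * ∫ x in Ioi 0, r * (exp (-(r * c * x)) / (1 + x)) := by
        congr 1
        refine setIntegral_congr_fun measurableSet_Ioi fun x (hx : 0 < x) ↦ ?_
        field_simp
        ring_nf
    _ = r * c * tricomiU11 (r * c) := by
        rw [integral_const_mul, tricomiU11]
        ring

lemma integrable_div_add_expMeasure (hr : 0 < r) {c : ℝ} (hc : 0 ≤ c) :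
    Integrable (fun x ↦ c / (x + c)) (expMeasure r) := by
  have := isProbabilityMeasure_expMeasure hr
  refine .of_bound (by fun_prop : Measurable fun x : ℝ ↦ c / (x + c)).aestronglyMeasurable 1 ?_
  filter_upwards [ae_pos_expMeasure hr] with x hx
  rw [Real.norm_of_nonneg (by positivity)]
  exact div_le_one_of_le₀ (by linarith) (by positivity)

lemma prod_expMeasure_apply_of_ae_preimage_eq_Ioi {α : Type*} [MeasurableSpace α] {ν : Measure α}
    [SFinite ν] (hr : 0 < r) {S : Set (α × ℝ)} (hS : MeasurableSet S) {g : α → ℝ}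
    (hg : ∀ᵐ a ∂ν, 0 ≤ g a ∧ Prod.mk a ⁻¹' S = Ioi (g a)) :
    ν.prod (expMeasure r) S = ∫⁻ a, ENNReal.ofReal (exp (-(r * g a))) ∂ν := by
  have := isProbabilityMeasure_expMeasure hr
  rw [Measure.prod_apply hS]
  exact lintegral_congr_ae <| hg.mono fun a ⟨hga, hslice⟩ ↦ by
    simp only [hslice, expMeasure_Ioi hr hga]

lemma map_prodMk_prodMk_eq_prod {Ω β : Type*} [MeasurableSpace Ω] [MeasurableSpace β]
    {P : Measure Ω} [IsFiniteMeasure P] {u v z : Ω → β} (h : iIndepFun ![u, v, z] P)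
    (hu : Measurable u) (hv : Measurable v) (hz : Measurable z) :
    P.map (fun ω ↦ ((u ω, v ω), z ω)) = ((P.map u).prod (P.map v)).prod (P.map z) := by
  have hmeas : ∀ i, Measurable (![u, v, z] i) := fun i ↦ by fin_cases i <;> assumption
  rw [(indepFun_iff_map_prod_eq_prod_map_map (hu.prodMk hv).aemeasurable hz.aemeasurable).1
      (h.indepFun_prodMk hmeas 0 1 2 (by decide) (by decide)),
    (indepFun_iff_map_prod_eq_prod_map_map hu.aemeasurable hv.aemeasurable).1
      (h.indepFun (show (0 : Fin 3) ≠ 1 by decide))]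

lemma lintegral_exp_neg_mul_add_div_expMeasure (hr : 0 < r) {w x : ℝ} (hw : 0 ≤ w) (hx : 0 < x) :
    ∫⁻ y, ENNReal.ofReal (exp (-(w * (x + y) / x))) ∂expMeasure r =
      ENNReal.ofReal (exp (-w) * (1 - w / r / (x + w / r))) := by
  have hsplit : ∀ y, exp (-(w * (x + y) / x)) = exp (-w) * exp (-(w / x * y)) := fun y ↦ by
    rw [← exp_add]
    congr 1
    field_simp
    ring
  simp_rw [hsplit, ENNReal.ofReal_mul (exp_pos _).le]
  rw [lintegral_const_mul' _ _ ENNReal.ofReal_ne_top,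
    lintegral_exp_neg_mul_expMeasure hr.le (by positivity)]
  congr 2
  field_simp
  ring

lemma measureReal_prod_expMeasure_lt_mul_div_add {μ₁ μ₂ w : ℝ} (hμ₁ : 0 < μ₁) (hμ₂ : 0 < μ₂)
    (hw : 0 ≤ w) :
    (((expMeasure μ₁).prod (expMeasure μ₂)).prod (expMeasure 1)).real
        {p | w < p.1.1 * p.2 / (p.1.1 + p.1.2)} =
      exp (-w) * (1 - (μ₁ / μ₂) * w * tricomiU11 ((μ₁ / μ₂) * w)) := by
  have := isProbabilityMeasure_expMeasure hμ₁
  have := isProbabilityMeasure_expMeasure hμ₂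
  set c := w / μ₂ with hc
  have hc0 : 0 ≤ c := by positivity
  have hpos : ∀ᵐ p ∂(expMeasure μ₁).prod (expMeasure μ₂), 0 < p.1 ∧ 0 < p.2 :=
    (Measure.quasiMeasurePreserving_fst.ae (ae_pos_expMeasure hμ₁)).and
      (Measure.quasiMeasurePreserving_snd.ae (ae_pos_expMeasure hμ₂))
  have hslice : ∀ᵐ p ∂(expMeasure μ₁).prod (expMeasure μ₂), 0 ≤ w * (p.1 + p.2) / p.1 ∧
      Prod.mk p ⁻¹' {p | w < p.1.1 * p.2 / (p.1.1 + p.1.2)} = Ioi (w * (p.1 + p.2) / p.1) := by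
    filter_upwards [hpos] with p ⟨hx, hy⟩
    refine ⟨by positivity, ?_⟩
    ext t
    rw [mem_preimage, mem_ofPred_eq, mem_Ioi, lt_div_iff₀ (by positivity), div_lt_iff₀ hx,
      mul_comm t]
  have hinner : ∀ᵐ x ∂expMeasure μ₁,
      ∫⁻ y, ENNReal.ofReal (exp (-(1 * (w * (x + y) / x)))) ∂expMeasure μ₂ =
        ENNReal.ofReal (exp (-w) * (1 - c / (x + c))) := by
    filter_upwards [ae_pos_expMeasure hμ₁] with x hx
    simp_rw [one_mul]
    exact lintegral_exp_neg_mul_add_div_expMeasure hμ₂ hw hx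
  have hnonneg : ∀ᵐ x ∂expMeasure μ₁, 0 ≤ exp (-w) * (1 - c / (x + c)) := by
    filter_upwards [ae_pos_expMeasure hμ₁] with x hx
    exact mul_nonneg (exp_pos _).le
      (sub_nonneg.2 (div_le_one_of_le₀ (by linarith) (by positivity)))
  rw [measureReal_def, prod_expMeasure_apply_of_ae_preimage_eq_Ioi one_pos
      (measurableSet_lt measurable_const (by fun_prop)) hslice,
    lintegral_prod _ (by fun_prop), lintegral_congr_ae hinner,
    ← integral_eq_lintegral_of_nonneg_ae hnonneg
      (by fun_prop : Measurable fun x : ℝ ↦ exp (-w) * (1 - c / (x + c))).aestronglyMeasurable,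
    integral_const_mul, integral_sub (integrable_const 1) (integrable_div_add_expMeasure hμ₁ hc0),
    integral_div_add_expMeasure hμ₁.le hc0, integral_const, probReal_univ, one_smul, hc,
    ← mul_div_assoc, mul_div_right_comm]

end ProbabilityTheory

/-- If `u ~ Exp(μ₁)`, `v ~ Exp(μ₂)`, `z ~ Exp(1)` are independent exponential random
variables, then `W₁ = uز/(u+v)` has cdf
`F(w) = 1 - e^{-w} [1 - (μ₁/μ₂) w Ψ(1,1,(μ₁/μ₂) w)]` for `w ≥ 0`. -/
theorem cdf_W1_tricomi
    {Ω : Type*} [MeasureSpace Ω] [IsProbabilityMeasure (ℙ : Measure Ω)]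
    (μ₁ μ₂ : ℝ) (hμ₁ : 0 < μ₁) (hμ₂ : 0 < μ₂)
    (u v z : Ω → ℝ)
    (hu : Measure.map u ℙ = expMeasure μ₁)
    (hv : Measure.map v ℙ = expMeasure μ₂)
    (hz : Measure.map z ℙ = expMeasure 1)
    (hmu : Measurable u) (hmv : Measurable v) (hmz : Measurable z)
    (hindep : iIndepFun ![u, v, z] ℙ) :
    ∀ w : ℝ, 0 ≤ w →
      (ℙ {ω | u ω * z ω / (u ω + v ω) ≤ w}).toReal =
        1 - Real.exp (-w) * (1 - (μ₁ / μ₂) * w * tricomiU11 ((μ₁ / μ₂) * w)) := by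
  intro w hw
  have hS : MeasurableSet {p : (ℝ × ℝ) × ℝ | w < p.1.1 * p.2 / (p.1.1 + p.1.2)} :=
    measurableSet_lt measurable_const (by fun_prop)
  have htail : (ℙ : Measure Ω).real {ω | w < u ω * z ω / (u ω + v ω)} =
      exp (-w) * (1 - (μ₁ / μ₂) * w * tricomiU11 ((μ₁ / μ₂) * w)) := by
    rw [← measureReal_prod_expMeasure_lt_mul_div_add hμ₁ hμ₂ hw, ← hu, ← hv, ← hz,
      ← map_prodMk_prodMk_eq_prod hindep hmu hmv hmz, map_measureReal_apply (by fun_prop) hS]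
    rfl
  have hcompl : {ω | u ω * z ω / (u ω + v ω) ≤ w} = {ω | w < u ω * z ω / (u ω + v ω)}ᶜ := by
    ext ω
    simp
  rw [← measureReal_def, hcompl, probReal_compl_eq_one_sub (measurableSet_lt measurable_const
    (by fun_prop)), htail]
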